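/- Fix natural numbers n, m ≥ 1 and polynomials f_1,…,f_n ∈ ℤ[x_1,…,x_m]. Then the following are equivalent: (1) for every prime p there exists x ∈ (ℤ^ab/pℤ^ab)^m with f_i(x) = 0 for all 1 ≤ i ≤ n; (2) for every algebraically closed field K (of any characteristic) there exists x ∈ K^m with f_i(x) = 0 for all 1 ≤ i ≤ n. -/

import Mathlib

/-!
Both conditions say that the system has a zero in suitable rings, and zeros are transported along
ring homomorphisms. For `(1) → (2)` in characteristic `p`, `ℤ^ab/pℤ^ab` is integral over `ℤ`, so
each of its residue fields is algebraic over `𝔽_p` and embeds into `K`. In characteristic `0`,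
if the `fᵢ` generate the unit ideal over `ℚ`, clearing denominators puts a nonzero integer `D`
in the ideal they generate over `ℤ`, which a zero modulo a prime `p ∤ D` rules out; otherwise
the Nullstellensatz gives a zero in `K`.

For `(2) → (1)`, a zero over an algebraic closure of `𝔽_p` lies in a finite field `F` with `|F| = N + 1`. Reducing a
primitive `N`-th root of unity of `ℤ^ab` gives a root of `Φ_N` in `ℤ^ab/pℤ^ab`, so it suffices to
embed `F` into `𝔽_p[X]/(Φ_N)`. As `p ∤ N`, that algebra is reduced, hence the product of its
residue fields, and each of them contains a primitive `N`-th root of unity, so a splitting field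
of `X^{N+1} - X`.
-/

noncomputable section

/-- The ring of abelian algebraic integers `ℤ^ab`: the subring of a fixed algebraic
closure of `ℚ` generated by all roots of unity. -/
noncomputable def Zab : Subring (AlgebraicClosure ℚ) :=
  Subring.closure {x : AlgebraicClosure ℚ | ∃ n : ℕ, 0 < n ∧ x ^ n = 1}

/-- The quotient `ℤ^ab / p ℤ^ab`. -/
noncomputable abbrev ZabMod (p : ℕ) : Type :=
  Zab ⧸ Ideal.span {(p : Zab)}

section CommonZero

open MvPolynomial

def HasCommonZero {ι σ : Type*} (f : ι → MvPolynomial σ ℤ) (R : Type*) [CommRing R] : Prop :=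
  ∃ x : σ → R, ∀ i, aeval x (f i) = 0

theorem MvPolynomial.aeval_int_ringHom_apply {σ R S : Type*} [CommRing R] [CommRing S]
    (φ : R →+* S) (x : σ → R) (g : MvPolynomial σ ℤ) :
    aeval (fun j => φ (x j)) g = φ (aeval x g) :=
  (comp_aeval_apply x φ.toIntAlgHom g).symm

namespace HasCommonZero

variable {ι σ : Type*} {f : ι → MvPolynomial σ ℤ}

theorem map {R S : Type*} [CommRing R] [CommRing S] (h : HasCommonZero f R) (φ : R →+* S) :
    HasCommonZero f S := by
  obtain ⟨x, hx⟩ := h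
  exact ⟨fun j => φ (x j), fun i => by rw [aeval_int_ringHom_apply, hx, map_zero]⟩

theorem aeval_eq_zero_of_mem_span {R : Type*} [CommRing R] {x : σ → R}
    (hx : ∀ i, aeval x (f i) = 0) {g : MvPolynomial σ ℤ} (hg : g ∈ Ideal.span (Set.range f)) :
    aeval x g = 0 := by
  refine Ideal.span_le (I := RingHom.ker (aeval x)).mpr ?_ hg
  rintro _ ⟨i, rfl⟩
  exact hx i

theorem exists_finite_intermediateField [Finite σ] {k L : Type*} [Field k] [Finite k] [Field L]
    [Algebra k L] [Algebra.IsAlgebraic k L] (h : HasCommonZero f L) :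
    ∃ F : IntermediateField k L, Finite F ∧ HasCommonZero f F := by
  obtain ⟨x, hx⟩ := h
  let F := IntermediateField.adjoin k (Set.range x)
  have : FiniteDimensional k F := IntermediateField.finiteDimensional_adjoin
    fun z _ => Algebra.IsIntegral.isIntegral z
  let y : σ → F := fun j => ⟨x j, IntermediateField.subset_adjoin _ _ ⟨j, rfl⟩⟩
  refine ⟨F, Module.finite_of_finite k, y, fun i => F.val.toRingHom.injective ?_⟩
  rw [← aeval_int_ringHom_apply, map_zero]
  exact hx i

end HasCommonZero

theorem MvPolynomial.zeroLocus_nonempty_of_ne_top {k K σ : Type*} [Field k] [Field K]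
    [Algebra k K] [IsAlgClosed K] [Finite σ] {I : Ideal (MvPolynomial σ k)} (hI : I ≠ ⊤) :
    (zeroLocus K I).Nonempty := by
  rw [Set.nonempty_iff_ne_empty]
  intro h
  have := vanishingIdeal_zeroLocus_eq_radical (K := K) I
  rw [h, vanishingIdeal_empty, eq_comm, Ideal.radical_eq_top] at this
  exact hI this

attribute [local instance] MvPolynomial.algebraMvPolynomial in
theorem MvPolynomial.exists_ne_zero_C_mem_of_map_eq_top {σ : Type*} {I : Ideal (MvPolynomial σ ℤ)}
    (hI : I.map (map (Int.castRingHom ℚ)) = ⊤) : ∃ D : ℤ, D ≠ 0 ∧ C D ∈ I := by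
  have hmem : (1 : MvPolynomial σ ℚ) ∈ I.map (algebraMap _ _) := by
    rw [algebraMap_def, algebraMap_int_eq, hI]
    exact Submodule.mem_top
  obtain ⟨⟨⟨g, hg⟩, ⟨_, D, hD, rfl⟩⟩, h⟩ := (IsLocalization.mem_map_algebraMap_iff
    ((nonZeroDivisors ℤ).map (C (σ := σ))) (MvPolynomial σ ℚ)).mp hmem
  refine ⟨D, nonZeroDivisors.ne_zero hD, ?_⟩
  rw [one_mul, algebraMap_def] at h
  rwa [show C D = g from map_injective _ (algebraMap ℤ ℚ).injective_int h]

theorem HasCommonZero.of_forall_prime {ι σ : Type*} [Finite σ] {f : ι → MvPolynomial σ ℤ}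
    (R : ℕ → Type*) [∀ p, CommRing (R p)] (hR : ∀ p, p.Prime → CharP (R p) p)
    (h : ∀ p, p.Prime → HasCommonZero f (R p)) (K : Type*) [Field K] [IsAlgClosed K]
    [CharZero K] : HasCommonZero f K := by
  by_cases hI : (Ideal.span (Set.range f)).map (MvPolynomial.map (Int.castRingHom ℚ)) = ⊤
  · obtain ⟨D, hD, hDI⟩ := exists_ne_zero_C_mem_of_map_eq_top hI
    obtain ⟨p, hDp, hp⟩ := Nat.exists_infinite_primes (D.natAbs + 1)
    obtain ⟨x, hx⟩ := h p hp
    have := hR p hp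
    have hpD : (p : ℤ) ∣ D := (CharP.intCast_eq_zero_iff (R p) p D).mp
      (by simpa using aeval_eq_zero_of_mem_span hx hDI)
    have := Nat.le_of_dvd (Int.natAbs_pos.mpr hD) (Int.natCast_dvd.mp hpD)
    omega
  · obtain ⟨x, hx⟩ := zeroLocus_nonempty_of_ne_top (K := K) hI
    refine ⟨x, fun i => ?_⟩
    have := hx _ (Ideal.mem_map_of_mem _ (Ideal.subset_span ⟨i, rfl⟩))
    rwa [← algebraMap_int_eq, aeval_map_algebraMap] at this

end CommonZero

theorem Ideal.Quotient.nonempty_ringHom_isAlgClosed {R K : Type*} [CommRing R]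
    [Algebra.IsIntegral ℤ R] (p : ℕ) [Fact p.Prime] {I : Ideal R} (hI : I ≠ ⊤) (hpI : (p : R) ∈ I)
    [Field K] [IsAlgClosed K] [CharP K p] : Nonempty (R ⧸ I →+* K) := by
  obtain ⟨M, hM, hIM⟩ := Ideal.exists_le_maximal I hI
  let L := R ⧸ M
  let : Field L := Ideal.Quotient.field M
  have : CharP L p := (CharP.charP_iff_prime_eq_zero Fact.out).mpr <| by
    rw [← map_natCast (Ideal.Quotient.mk M), Ideal.Quotient.eq_zero_iff_mem]
    exact hIM hpI
  let := ZMod.algebra L p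
  let := ZMod.algebra K p
  have : Algebra.IsIntegral (ZMod p) L := Algebra.IsIntegral.tower_top ℤ
  exact ⟨(IsAlgClosed.lift : L →ₐ[ZMod p] K).toRingHom.comp (Ideal.Quotient.factor hIM)⟩

theorem natCast_not_isUnit_of_isIntegral {R : Type*} [CommRing R] [CharZero R]
    [Algebra.IsIntegral ℤ R] {p : ℕ} (hp : p ≠ 1) : ¬ IsUnit (p : R) := by
  rw [← Ideal.span_singleton_eq_top, ← map_natCast (algebraMap ℤ R), ← Set.image_singleton,
    ← Ideal.map_span, Ideal.map_eq_top_iff _ (algebraMap ℤ R).injective_int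
      (algebraMap_isIntegral_iff.mpr inferInstance), Ideal.span_singleton_eq_top,
    Int.isUnit_iff_natAbs_eq, Int.natAbs_natCast]
  exact hp

section FiniteField

open Polynomial

theorem FiniteField.nonempty_algHom_of_isPrimitiveRoot {k F L : Type*} [Field k] [Field F]
    [Fintype F] [Algebra k F] [Field L] [Algebra k L] {ζ : L}
    (hζ : IsPrimitiveRoot ζ (Fintype.card F - 1)) : Nonempty (F →ₐ[k] L) := by
  have hsub : (X ^ Fintype.card F - X : k[X]) = X * (X ^ (Fintype.card F - 1) - 1) := by
    rw [mul_sub, ← pow_succ', Nat.sub_add_cancel Fintype.card_pos, mul_one]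
  refine ⟨IsSplittingField.lift F (X ^ Fintype.card F - X) ?_⟩
  rw [hsub, Polynomial.map_mul, Polynomial.map_sub, Polynomial.map_pow, map_X, Polynomial.map_one]
  exact Splits.X.mul (X_pow_sub_one_splits hζ)

theorem IsArtinianRing.nonempty_algHom_of_forall_maximal {k F R : Type*} [CommRing k]
    [CommRing F] [Algebra k F] [CommRing R] [Algebra k R] [IsArtinianRing R] [IsReduced R]
    (h : ∀ I : MaximalSpectrum R, Nonempty (F →ₐ[k] R ⧸ I.asIdeal)) :
    Nonempty (F →ₐ[k] R) :=
  ⟨(((IsArtinianRing.equivPi R).symm.restrictScalars k : _ ≃ₐ[k] R) : _ →ₐ[k] R).comp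
    (AlgHom.pi fun I => (h I).some)⟩

theorem FiniteField.nonempty_algHom_of_aeval_cyclotomic_eq_zero {k F R : Type*} [Field k]
    [Field F] [Fintype F] [Algebra k F] [CommRing R] [Algebra k R] {z : R}
    (hz : aeval z (cyclotomic (Fintype.card F - 1) k) = 0) : Nonempty (F →ₐ[k] R) := by
  set N := Fintype.card F - 1
  have : NeZero (N : k) := ⟨by
    have hq : (Fintype.card F : k) = 0 := (algebraMap k F).injective (by simp)
    rw [Nat.cast_sub Fintype.card_pos, hq]; simp⟩
  let A := AdjoinRoot (cyclotomic N k)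
  have : Module.Finite k A := (AdjoinRoot.powerBasis (cyclotomic_ne_zero N k)).finite
  have : IsArtinianRing A := .of_finite k A
  have : IsReduced A := (Ideal.isRadical_iff_quotient_reduced _).mp
    (isRadical_iff_span_singleton.mp (squarefree_cyclotomic N k).isRadical)
  obtain ⟨φ⟩ : Nonempty (F →ₐ[k] A) := IsArtinianRing.nonempty_algHom_of_forall_maximal fun I => by
    let : Field (A ⧸ I.asIdeal) := Ideal.Quotient.field _
    have : NeZero (N : A ⧸ I.asIdeal) := NeZero.nat_of_injective (algebraMap k _).injective
    have hroot : IsRoot (cyclotomic N (A ⧸ I.asIdeal))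
        (Ideal.Quotient.mkₐ k _ (AdjoinRoot.root (cyclotomic N k))) := by
      rw [← map_cyclotomic N (algebraMap k (A ⧸ I.asIdeal)), IsRoot, eval_map_algebraMap,
        aeval_algHom_apply, AdjoinRoot.aeval_eq, AdjoinRoot.mk_self, map_zero]
    exact FiniteField.nonempty_algHom_of_isPrimitiveRoot (isRoot_cyclotomic_iff.mp hroot)
  exact ⟨(AdjoinRoot.liftAlgHom _ (Algebra.ofId k R) z hz).comp φ⟩

end FiniteField

instance Zab.isIntegral : Algebra.IsIntegral ℤ Zab := by
  have hle : Zab ≤ (integralClosure ℤ (AlgebraicClosure ℚ)).toSubring := by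
    rw [Zab, Subring.closure_le]
    rintro x ⟨n, hn, hx⟩
    exact ⟨Polynomial.X ^ n - 1, Polynomial.monic_X_pow_sub_C 1 hn.ne', by simp [hx]⟩
  exact ⟨fun x => (isIntegral_algHom_iff Zab.subtype.toIntAlgHom Subtype.val_injective).mp
    (hle x.2)⟩

namespace ZabMod

open Polynomial

variable (p : ℕ)

instance [Fact p.Prime] : CharP (ZabMod p) p :=
  CharP.quotient Zab p (natCast_not_isUnit_of_isIntegral (Fact.out : p.Prime).ne_one)

theorem nonempty_ringHom_isAlgClosed [Fact p.Prime] (K : Type*) [Field K] [IsAlgClosed K]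
    [CharP K p] : Nonempty (ZabMod p →+* K) := by
  refine Ideal.Quotient.nonempty_ringHom_isAlgClosed (R := Zab) p ?_
    (Ideal.mem_span_singleton_self (p : Zab))
  rw [Ne, Ideal.span_singleton_eq_top]
  exact natCast_not_isUnit_of_isIntegral (Fact.out : p.Prime).ne_one

theorem exists_isRoot_cyclotomic {N : ℕ} (hN : 0 < N) :
    ∃ z : ZabMod p, (cyclotomic N (ZabMod p)).IsRoot z := by
  have : NeZero (N : AlgebraicClosure ℚ) := ⟨by exact_mod_cast hN.ne'⟩
  obtain ⟨ζ, hζ⟩ := IsAlgClosed.exists_root (cyclotomic N (AlgebraicClosure ℚ))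
    (degree_cyclotomic_pos N _ hN).ne'
  have hζ : IsPrimitiveRoot ζ N := isRoot_cyclotomic_iff.mp hζ
  let ζ' : Zab := ⟨ζ, Subring.subset_closure ⟨N, hN, hζ.pow_eq_one⟩⟩
  have hζ' : IsPrimitiveRoot ζ' N :=
    .of_map_of_injective (f := Zab.subtype) hζ Subtype.val_injective
  refine ⟨Ideal.Quotient.mk _ ζ', ?_⟩
  simpa using (hζ'.isRoot_cyclotomic hN).map (f := Ideal.Quotient.mk (Ideal.span {(p : Zab)}))

theorem nonempty_ringHom_of_finite [Fact p.Prime] (F : Type*) [Field F] [Finite F] [CharP F p] :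
    Nonempty (F →+* ZabMod p) := by
  have := Fintype.ofFinite F
  let := ZMod.algebra F p
  let := ZMod.algebra (ZabMod p) p
  obtain ⟨z, hz⟩ := exists_isRoot_cyclotomic p (N := Fintype.card F - 1)
    (Nat.sub_pos_of_lt Fintype.one_lt_card)
  have hz : aeval z (cyclotomic (Fintype.card F - 1) (ZMod p)) = 0 := by
    rwa [Polynomial.aeval_def, eval₂_eq_eval_map, map_cyclotomic]
  exact ⟨(FiniteField.nonempty_algHom_of_aeval_cyclotomic_eq_zero hz).some.toRingHom⟩

end ZabMod

theorem stmt15_general (n m : ℕ) (f : Fin n → MvPolynomial (Fin m) ℤ) :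
    (∀ p : ℕ, p.Prime →
        ∃ x : Fin m → ZabMod p, ∀ i : Fin n, MvPolynomial.aeval x (f i) = 0) ↔
    (∀ (K : Type) (_ : Field K), IsAlgClosed K →
        ∃ x : Fin m → K, ∀ i : Fin n, MvPolynomial.aeval x (f i) = 0) := by
  constructor
  · intro h K _ _
    obtain ⟨p, _⟩ := CharP.exists K
    rcases CharP.char_is_prime_or_zero K p with hp | rfl
    · have := Fact.mk hp
      exact HasCommonZero.map (h p hp) (ZabMod.nonempty_ringHom_isAlgClosed p K).some
    · have := CharP.charP_to_charZero K
      exact HasCommonZero.of_forall_prime ZabMod (fun p hp => have := Fact.mk hp; inferInstance)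
        h K
  · intro h p hp
    have := Fact.mk hp
    obtain ⟨F, _, hF⟩ := HasCommonZero.exists_finite_intermediateField (k := ZMod p)
      (h (AlgebraicClosure (ZMod p)) inferInstance inferInstance)
    exact hF.map (ZabMod.nonempty_ringHom_of_finite p F).some

/-- Fix `n, m ≥ 1` and integer polynomials `f i`. The system `f i = 0`
has a solution in `(ℤ^ab/pℤ^ab)^m` for every prime `p` iff it has a solution in `K^m` for
every algebraically closed field `K` (of any characteristic). -/
theorem stmt15 (n m : ℕ) (hn : 1 ≤ n) (hm : 1 ≤ m)
    (f : Fin n → MvPolynomial (Fin m) ℤ) :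
    (∀ p : ℕ, p.Prime →
        ∃ x : Fin m → ZabMod p, ∀ i : Fin n, MvPolynomial.aeval x (f i) = 0) ↔
    (∀ (K : Type) (_ : Field K), IsAlgClosed K →
        ∃ x : Fin m → K, ∀ i : Fin n, MvPolynomial.aeval x (f i) = 0) :=
  stmt15_general n m f

end
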